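/- For nonnegative integers n, k, r with n ≥ k, one has T_r(n+r, k+r) = ∑_{l=k}^{n} C(n,l) · T(l,k) · r^{n-l}. -/

import Mathlib

/-- The central factorial numbers of the second kind:
`T(n,k) = (1/k!) ∑_{j=0}^{k} (-1)^{k-j} C(k,j) (j - k/2)^n`. -/
noncomputable def centralT (n k : ℕ) : ℝ :=
  (1 / (Nat.factorial k : ℝ)) * ∑ j ∈ Finset.range (k + 1),
    (-1 : ℝ) ^ (k - j) * (Nat.choose k j : ℝ) * ((j : ℝ) - (k : ℝ) / 2) ^ n

/-- The extended `r`-central factorial numbers of the second kind: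
`T_r(n+r,k+r) = (1/k!) ∑_{j=0}^{k} (-1)^{k-j} C(k,j) (j + r - k/2)^n`. -/
noncomputable def rcentralT (r n k : ℕ) : ℝ :=
  (1 / (Nat.factorial k : ℝ)) * ∑ j ∈ Finset.range (k + 1),
    (-1 : ℝ) ^ (k - j) * (Nat.choose k j : ℝ) * ((j : ℝ) + (r : ℝ) - (k : ℝ) / 2) ^ n

/-!
Expanding `(j - k/2 + r)^n` by the binomial theorem writes `T_r(n+r, k+r)` as
`∑_{l ≤ n} C(n,l) T(l,k) r^(n-l)`. The terms with `l < k` vanish: `k! T(l,k)` is the `k`-th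
forward difference at `-k/2` of `t ↦ t^l`, a polynomial of degree below `k`.
-/

open Finset

theorem sum_range_alternating_choose_mul_add_pow_eq_zero {R : Type*} [CommRing R]
    {k l : ℕ} (hl : l < k) (x : R) :
    ∑ j ∈ range (k + 1), (-1 : R) ^ (k - j) * k.choose j * (x + j) ^ l = 0 := by
  have h := fwdDiff_iter_eq_sum_shift (1 : R) (fun t ↦ t ^ l) k x
  rw [fwdDiff_iter_pow_eq_zero_of_lt hl] at h
  simpa [zsmul_eq_mul] using h.symm

theorem centralT_eq_zero_of_lt {l k : ℕ} (hl : l < k) : centralT l k = 0 := by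
  have h := sum_range_alternating_choose_mul_add_pow_eq_zero hl (-(k : ℝ) / 2)
  rw [centralT, mul_eq_zero]
  right
  simpa only [neg_div, neg_add_eq_sub] using h

theorem rcentralT_eq_sum_range (r n k : ℕ) :
    rcentralT r n k =
      ∑ l ∈ range (n + 1), (n.choose l : ℝ) * centralT l k * (r : ℝ) ^ (n - l) := by
  simp_rw [rcentralT, centralT, add_sub_right_comm _ (r : ℝ), add_pow, mul_sum]
  rw [sum_comm]
  refine sum_congr rfl fun l _ ↦ ?_
  rw [sum_mul]
  exact sum_congr rfl fun j _ ↦ by ring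

theorem rcentralT_eq_sum_centralT (n k r : ℕ) :
    rcentralT r n k =
      ∑ l ∈ Finset.Icc k n, (Nat.choose n l : ℝ) * centralT l k * (r : ℝ) ^ (n - l) := by
  rw [rcentralT_eq_sum_range]
  refine (sum_subset (fun l hl ↦ ?_) fun l hl hlk ↦ ?_).symm
  · simp only [mem_Icc, mem_range] at hl ⊢
    omega
  · rw [centralT_eq_zero_of_lt (by simp_all), mul_zero, zero_mul]
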